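/- The branch through Solovay's tree is unique: with ρ defined from α : ℕ → ℕ and T : ℕ → ℕ → Prop (each T n decidable) as in Solovay's Lemma, any two functions γ, γ' : ℕ → ℕ satisfying ρ (initial segment of length n) ≠ 0 for all n are equal. -/

import Mathlib

/-!
Every branch through Solovay's tree is the jump encoding `β` itself. Since `ρ` is nonzero on all
initial segments, even entries must be `α k` and an odd entry `m + 1` must code the least witness
for `T k`; an odd entry `0` is impossible once a witness exists, because a segment longer than that
witness would then be rejected. Two branches therefore coincide.
-/

/-- The initial segment `[γ 0, ..., γ (n-1)]` of `γ` of length `n`. -/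
def seg (γ : ℕ → ℕ) (n : ℕ) : List ℕ := (List.range n).map γ

/-- `m` is the least `y` with `T k y`. -/
def IsLeastWitness (T : ℕ → ℕ → Prop) (k m : ℕ) : Prop :=
  T k m ∧ ∀ y, T k y → m ≤ y

/-- Solovay's bar: `rho α T s = 0` iff some entry of `s` violates the
jump-encoding conditions; otherwise `rho α T s = 1`. -/
noncomputable def rho (α : ℕ → ℕ) (T : ℕ → ℕ → Prop) (s : List ℕ) : ℕ := by
  classical
  exact if (∃ j : Fin s.length,
      (∃ k, (j : ℕ) = 2*k ∧ s.get j ≠ α k) ∨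
      (∃ k, (j : ℕ) = 2*k+1 ∧ s.get j = 0 ∧ ∃ y ≤ s.length, T k y) ∨
      (∃ k m, (j : ℕ) = 2*k+1 ∧ s.get j = m+1 ∧ ¬ IsLeastWitness T k m))
    then 0 else 1

/-- `s` is a correct initial segment of the jump-encoding `β`. -/
def Good (α : ℕ → ℕ) (T : ℕ → ℕ → Prop) (s : List ℕ) : Prop :=
  ∀ j : Fin s.length,
    (∀ k, (j : ℕ) = 2*k → s.get j = α k) ∧
    (∀ k, (j : ℕ) = 2*k+1 →
      (s.get j > 0 ↔ ∃ y, T k y) ∧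
      ∀ m, s.get j = m+1 → IsLeastWitness T k m)

open Classical in
-- The paper's `β`: `α` interleaved with the jumps of `T`, where `m + 1` codes the least witness `m`.
noncomputable def jumpEncoding (α : ℕ → ℕ) (T : ℕ → ℕ → Prop) (j : ℕ) : ℕ :=
  if j % 2 = 0 then α (j / 2)
  else if h : ∃ y, T (j / 2) y then Nat.find h + 1 else 0

theorem jumpEncoding_even (α : ℕ → ℕ) (T : ℕ → ℕ → Prop) (k : ℕ) :
    jumpEncoding α T (2 * k) = α k := by
  simp [jumpEncoding]

theorem jumpEncoding_odd_of_not_exists {α : ℕ → ℕ} {T : ℕ → ℕ → Prop} {k : ℕ}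
    (h : ¬ ∃ y, T k y) : jumpEncoding α T (2 * k + 1) = 0 := by
  have hk : (2 * k + 1) / 2 = k := by omega
  simp [jumpEncoding, hk, h]

theorem jumpEncoding_odd_of_isLeastWitness {α : ℕ → ℕ} {T : ℕ → ℕ → Prop} {k m : ℕ}
    (h : IsLeastWitness T k m) : jumpEncoding α T (2 * k + 1) = m + 1 := by
  classical
  have hk : (2 * k + 1) / 2 = k := by omega
  have hex : ∃ y, T k y := ⟨m, h.1⟩
  have hfind : Nat.find hex = m :=
    (Nat.find_eq_iff hex).2 ⟨h.1, fun n hn hTn => (h.2 n hTn).not_gt hn⟩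
  simp [jumpEncoding, hk, hex, hfind]

theorem seg_length (γ : ℕ → ℕ) (n : ℕ) : (seg γ n).length = n := by
  simp [seg]

theorem getElem_seg (γ : ℕ → ℕ) (n : ℕ) {j : ℕ} (hj : j < (seg γ n).length) :
    (seg γ n)[j] = γ j := by
  simp [seg]

section Branch

variable {α : ℕ → ℕ} {T : ℕ → ℕ → Prop} {γ : ℕ → ℕ} {n : ℕ}

theorem eq_of_rho_seg_ne_zero_of_even (h : rho α T (seg γ n) ≠ 0) {k : ℕ} (hk : 2 * k < n) :
    γ (2 * k) = α k := by
  by_contra hne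
  refine h (if_pos ⟨⟨2 * k, by rwa [seg_length]⟩, Or.inl ⟨k, rfl, ?_⟩⟩)
  rwa [List.get_eq_getElem, getElem_seg]

theorem ne_zero_of_rho_seg_ne_zero_of_odd (h : rho α T (seg γ n) ≠ 0) {k y : ℕ}
    (hk : 2 * k + 1 < n) (hy : y ≤ n) (hT : T k y) : γ (2 * k + 1) ≠ 0 := by
  intro hzero
  refine h (if_pos ⟨⟨2 * k + 1, by rwa [seg_length]⟩, Or.inr (Or.inl ⟨k, rfl, ?_, y, ?_, hT⟩)⟩)
  · rwa [List.get_eq_getElem, getElem_seg]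
  · rwa [seg_length]

theorem isLeastWitness_of_rho_seg_ne_zero_of_odd (h : rho α T (seg γ n) ≠ 0) {k m : ℕ}
    (hk : 2 * k + 1 < n) (hm : γ (2 * k + 1) = m + 1) : IsLeastWitness T k m := by
  by_contra hne
  refine h (if_pos ⟨⟨2 * k + 1, by rwa [seg_length]⟩, Or.inr (Or.inr ⟨k, m, rfl, ?_, hne⟩)⟩)
  rwa [List.get_eq_getElem, getElem_seg]

theorem eq_jumpEncoding_of_rho_seg_ne_zero (h : ∀ n, rho α T (seg γ n) ≠ 0) :
    γ = jumpEncoding α T := by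
  funext j
  obtain ⟨k, rfl | rfl⟩ := Nat.even_or_odd' j
  · rw [jumpEncoding_even]
    exact eq_of_rho_seg_ne_zero_of_even (h _) (Nat.lt_succ_self _)
  by_cases hex : ∃ y, T k y
  · obtain ⟨y, hy⟩ := hex
    -- a long enough segment sees the witness `y`, which rules out the entry `0`
    obtain ⟨m, hm⟩ := Nat.exists_eq_succ_of_ne_zero <|
      ne_zero_of_rho_seg_ne_zero_of_odd (h (2 * k + 2 + y)) (by omega) (by omega) hy
    rw [hm, jumpEncoding_odd_of_isLeastWitness
      (isLeastWitness_of_rho_seg_ne_zero_of_odd (h _) (Nat.lt_succ_self _) hm)]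
  · rw [jumpEncoding_odd_of_not_exists hex]
    by_contra hne
    obtain ⟨m, hm⟩ := Nat.exists_eq_succ_of_ne_zero hne
    exact hex ⟨m, (isLeastWitness_of_rho_seg_ne_zero_of_odd (h _) (Nat.lt_succ_self _) hm).1⟩

end Branch

theorem branch_unique_general (α : ℕ → ℕ) (T : ℕ → ℕ → Prop)
    (γ γ' : ℕ → ℕ)
    (hγ : ∀ n, rho α T (seg γ n) ≠ 0)
    (hγ' : ∀ n, rho α T (seg γ' n) ≠ 0) :
    γ = γ' :=
  (eq_jumpEncoding_of_rho_seg_ne_zero hγ).trans (eq_jumpEncoding_of_rho_seg_ne_zero hγ').symm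

/-- The branch through Solovay's tree is unique. -/
theorem branch_unique (α : ℕ → ℕ) (T : ℕ → ℕ → Prop)
    (hT : ∀ n, DecidablePred (T n)) (γ γ' : ℕ → ℕ)
    (hγ : ∀ n, rho α T (seg γ n) ≠ 0)
    (hγ' : ∀ n, rho α T (seg γ' n) ≠ 0) :
    γ = γ' :=
  branch_unique_general α T γ γ' hγ hγ'
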